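/- Let U ⊆ ℝⁿ_x × ℝⁿ_ξ be open and let v, w : U → ℂᵐ be C^∞ column-functions satisfying v*v = 1, w*w = 1 and w*v = 0 at every point of U. Put P := v v* and Q := w w*. Then at every point of U the following chain of equalities holds: tr(Q {P, P}) = tr(P {P, Q}) = − tr(Q {Q, P}) = − tr(P {Q, Q}) = w* {v, v*} w = Σ_{α=1}^n [ (w* ∂_{x^α}v)((∂_{ξ_α}v)* w) − (w* ∂_{ξ_α}v)((∂_{x^α}v)* w) ]. -/

import Mathlib

open Matrix MeasureTheory

noncomputable section

/-- Phase space `ℝⁿ_x × ℝⁿ_ξ`. -/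
abbrev Phase (n : ℕ) := (Fin n → ℝ) × (Fin n → ℝ)

/-- Direction of differentiation in the position variable `x^α`. -/
def dX (n : ℕ) (α : Fin n) : Phase n := (Pi.single α 1, 0)

/-- Direction of differentiation in the dual variable `ξ_α`. -/
def dXi (n : ℕ) (α : Fin n) : Phase n := (0, Pi.single α 1)

/-- Partial derivative of a real scalar function in the direction `d`. -/
def pdS {n : ℕ} (f : Phase n → ℝ) (d : Phase n) (p : Phase n) : ℝ :=
  fderiv ℝ f p d

/-- Partial derivative of a complex scalar function in the direction `d`. -/
def pdC {n : ℕ} (f : Phase n → ℂ) (d : Phase n) (p : Phase n) : ℂ :=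
  fderiv ℝ f p d

/-- Entrywise partial derivative of a column-function in the direction `d`. -/
def pdV {n m : ℕ} (v : Phase n → Fin m → ℂ) (d : Phase n) (p : Phase n) : Fin m → ℂ :=
  fun i => fderiv ℝ (fun q => v q i) p d

/-- Entrywise partial derivative of the conjugate transpose (row) `v*` of a
column-function `v`, in the direction `d`. -/
def pdVstar {n m : ℕ} (v : Phase n → Fin m → ℂ) (d : Phase n) (p : Phase n) : Fin m → ℂ :=
  fun i => fderiv ℝ (fun q => star (v q i)) p d

/-- Entrywise partial derivative of a matrix-function in the direction `d`. -/
def pdM {n m : ℕ} (A : Phase n → Matrix (Fin m) (Fin m) ℂ) (d : Phase n) (p : Phase n) :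
    Matrix (Fin m) (Fin m) ℂ :=
  Matrix.of fun i j => fderiv ℝ (fun q => A q i j) p d

/-- Second partial derivative of a real scalar function. -/
def pdS2 {n : ℕ} (f : Phase n → ℝ) (d1 d2 : Phase n) (p : Phase n) : ℝ :=
  pdS (fun q => pdS f d2 q) d1 p

/-- Entrywise second partial derivative of a matrix-function. -/
def pdM2 {n m : ℕ} (A : Phase n → Matrix (Fin m) (Fin m) ℂ) (d1 d2 : Phase n) (p : Phase n) :
    Matrix (Fin m) (Fin m) ℂ :=
  pdM (fun q => pdM A d2 q) d1 p

/-- The scalar Poisson bracket `{v*, v}`. -/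
def sbrack {n m : ℕ} (v : Phase n → Fin m → ℂ) (p : Phase n) : ℂ :=
  ∑ α : Fin n, (pdVstar v (dX n α) p ⬝ᵥ pdV v (dXi n α) p
    - pdVstar v (dXi n α) p ⬝ᵥ pdV v (dX n α) p)

/-- The Poisson bracket `{A, B}` of two matrix-functions. -/
def mbrack {n m : ℕ} (A B : Phase n → Matrix (Fin m) (Fin m) ℂ) (p : Phase n) :
    Matrix (Fin m) (Fin m) ℂ :=
  ∑ α : Fin n, (pdM A (dX n α) p * pdM B (dXi n α) p - pdM A (dXi n α) p * pdM B (dX n α) p)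

/-- The generalised Poisson bracket `{v*, Q, v}`, where `Q` is a matrix-function
(which is not differentiated). -/
def gbrack {n m : ℕ} (v : Phase n → Fin m → ℂ) (Q : Phase n → Matrix (Fin m) (Fin m) ℂ)
    (p : Phase n) : ℂ :=
  ∑ α : Fin n, (pdVstar v (dX n α) p ⬝ᵥ (Q p).mulVec (pdV v (dXi n α) p)
    - pdVstar v (dXi n α) p ⬝ᵥ (Q p).mulVec (pdV v (dX n α) p))

/-- The orthogonal projection `v v*` onto the span of a column `v`. -/
def Proj1 {n m : ℕ} (v : Phase n → Fin m → ℂ) (p : Phase n) : Matrix (Fin m) (Fin m) ℂ :=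
  vecMulVec (v p) (star (v p))

/-- The matrix Poisson bracket `{v, v*}` of a column-function and its conjugate
transpose (row): `Σ_α (∂_{x^α}v)(∂_{ξ_α}v*) − (∂_{ξ_α}v)(∂_{x^α}v*)`. -/
def cbrack {n m : ℕ} (v : Phase n → Fin m → ℂ) (p : Phase n) : Matrix (Fin m) (Fin m) ℂ :=
  ∑ α : Fin n, (vecMulVec (pdV v (dX n α) p) (pdVstar v (dXi n α) p)
    - vecMulVec (pdV v (dXi n α) p) (pdVstar v (dX n α) p))


section Helpers

variable {n m : ℕ}

lemma vecMulVec_mulVec_eq (x y z : Fin m → ℂ) :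
    (vecMulVec x y).mulVec z = (y ⬝ᵥ z) • x := by
  ext i
  simp only [Matrix.mulVec, dotProduct, Matrix.vecMulVec_apply, Pi.smul_apply,
    smul_eq_mul, Finset.sum_mul]
  exact Finset.sum_congr rfl fun j _ => by ring

lemma trace_vecMulVec_mul (x y : Fin m → ℂ) (M : Matrix (Fin m) (Fin m) ℂ) :
    (vecMulVec x y * M).trace = y ⬝ᵥ M.mulVec x := by
  simp only [Matrix.trace, Matrix.diag, Matrix.mul_apply, Matrix.vecMulVec_apply,
    dotProduct, Matrix.mulVec, Finset.mul_sum]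
  rw [Finset.sum_comm]
  exact Finset.sum_congr rfl fun j _ => Finset.sum_congr rfl fun i _ => by ring

lemma sum_mulVec_eq (s : Finset (Fin n)) (A : Fin n → Matrix (Fin m) (Fin m) ℂ)
    (x : Fin m → ℂ) :
    (∑ α ∈ s, A α).mulVec x = ∑ α ∈ s, (A α).mulVec x := by
  ext i
  simp only [Matrix.mulVec, dotProduct, Matrix.sum_apply, Finset.sum_mul,
    Finset.sum_apply]
  exact Finset.sum_comm

lemma dot_sum (s : Finset (Fin n)) (x : Fin m → ℂ) (f : Fin n → Fin m → ℂ) :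
    x ⬝ᵥ ∑ α ∈ s, f α = ∑ α ∈ s, x ⬝ᵥ f α := by
  simp only [dotProduct, Finset.sum_apply, Finset.mul_sum]
  exact Finset.sum_comm

lemma star_dot (x y : Fin m → ℂ) : star (star x ⬝ᵥ y) = star y ⬝ᵥ x := by
  simp [dotProduct, mul_comm]

lemma fderiv_conj (f : Phase n → ℂ) (p d : Phase n) :
    fderiv ℝ (fun q => star (f q)) p d = star (fderiv ℝ f p d) := by
  rw [fderiv_star]
  rfl

lemma pdVstar_eq (v : Phase n → Fin m → ℂ) (d p : Phase n) :
    pdVstar v d p = star (pdV v d p) := by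
  funext i
  exact fderiv_conj (fun q => v q i) p d

lemma pdV_dot_rel {U : Set (Phase n)} (hU : IsOpen U)
    {u v : Phase n → Fin m → ℂ} {c : ℂ}
    (hu : ∀ i, ContDiffOn ℝ (⊤ : ℕ∞) (fun p => u p i) U)
    (hv : ∀ i, ContDiffOn ℝ (⊤ : ℕ∞) (fun p => v p i) U)
    (h : ∀ p ∈ U, star (u p) ⬝ᵥ v p = c)
    {p : Phase n} (hp : p ∈ U) (d : Phase n) :
    star (pdV u d p) ⬝ᵥ v p + star (u p) ⬝ᵥ pdV v d p = 0 := by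
  have hud : ∀ i, DifferentiableAt ℝ (fun q => u q i) p := fun i =>
    ((hu i).contDiffAt (hU.mem_nhds hp)).differentiableAt (by simp)
  have hvd : ∀ i, DifferentiableAt ℝ (fun q => v q i) p := fun i =>
    ((hv i).contDiffAt (hU.mem_nhds hp)).differentiableAt (by simp)
  have hF : (fun q => ∑ i, star (u q i) * v q i) =ᶠ[nhds p] fun _ => c := by
    filter_upwards [hU.mem_nhds hp] with q hq
    simpa [dotProduct] using h q hq
  have h0 : fderiv ℝ (fun q => ∑ i, star (u q i) * v q i) p = 0 := by
    rw [hF.fderiv_eq]; exact fderiv_const_apply c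
  rw [fderiv_fun_sum (A := fun i q => star (u q i) * v q i)
    (fun i _ => ((hud i).star.mul (hvd i)))] at h0
  have key : ∀ i, (fderiv ℝ (fun q => star (u q i) * v q i) p) d
      = star (u p i) * pdV v d p i + v p i * star (pdV u d p i) := by
    intro i
    rw [fderiv_fun_mul ((hud i).star) (hvd i)]
    simp only [ContinuousLinearMap.add_apply, ContinuousLinearMap.smul_apply, smul_eq_mul, pdV]
    rw [fderiv_conj]
  have h0d : ∑ i, (star (u p i) * pdV v d p i + v p i * star (pdV u d p i)) = 0 := by
    have h2 : (∑ i, fderiv ℝ (fun q => star (u q i) * v q i) p) d = 0 := by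
      rw [h0]; exact rfl
    simp only [ContinuousLinearMap.sum_apply, key] at h2
    exact h2
  calc star (pdV u d p) ⬝ᵥ v p + star (u p) ⬝ᵥ pdV v d p
      = ∑ i, (star (u p i) * pdV v d p i + v p i * star (pdV u d p i)) := by
        simp only [dotProduct, Pi.star_apply, ← Finset.sum_add_distrib]
        exact Finset.sum_congr rfl fun i _ => by ring
    _ = 0 := h0d

lemma pdM_Proj1 {U : Set (Phase n)} (hU : IsOpen U)
    {v : Phase n → Fin m → ℂ}
    (hv : ∀ i, ContDiffOn ℝ (⊤ : ℕ∞) (fun p => v p i) U)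
    {p : Phase n} (hp : p ∈ U) (d : Phase n) :
    pdM (Proj1 v) d p
      = vecMulVec (pdV v d p) (star (v p)) + vecMulVec (v p) (star (pdV v d p)) := by
  have hvd : ∀ i, DifferentiableAt ℝ (fun q => v q i) p := fun i =>
    ((hv i).contDiffAt (hU.mem_nhds hp)).differentiableAt (by simp)
  ext i j
  show fderiv ℝ (fun q => v q i * star (v q j)) p d = _
  rw [fderiv_fun_mul (hvd i) ((hvd j).star)]
  simp only [Matrix.add_apply, Matrix.vecMulVec_apply, Pi.star_apply,
    ContinuousLinearMap.add_apply, ContinuousLinearMap.smul_apply, smul_eq_mul, pdV]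
  rw [fderiv_conj]
  ring

end Helpers

section Core

variable {m : ℕ} (V W a b c e : Fin m → ℂ)

lemma core1 (hVV : star V ⬝ᵥ V = 1) (hWV : star W ⬝ᵥ V = 0) (hVW : star V ⬝ᵥ W = 0) :
    star W ⬝ᵥ ((vecMulVec a (star V) + vecMulVec V (star a)) *
        (vecMulVec b (star V) + vecMulVec V (star b)) -
      (vecMulVec b (star V) + vecMulVec V (star b)) *
        (vecMulVec a (star V) + vecMulVec V (star a))).mulVec W
    = (star W ⬝ᵥ a) * (star b ⬝ᵥ W) - (star W ⬝ᵥ b) * (star a ⬝ᵥ W) := by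
  simp only [Matrix.sub_mulVec, ← Matrix.mulVec_mulVec, Matrix.add_mulVec,
    vecMulVec_mulVec_eq, Matrix.mulVec_add, Matrix.mulVec_smul, dotProduct_sub,
    dotProduct_add, dotProduct_smul, smul_eq_mul]
  rw [hVV, hVW, hWV]
  ring

lemma core2 (hVV : star V ⬝ᵥ V = 1) (hWV : star W ⬝ᵥ V = 0) (hVW : star V ⬝ᵥ W = 0)
    (hcV : star c ⬝ᵥ V = -(star W ⬝ᵥ a)) (heV : star e ⬝ᵥ V = -(star W ⬝ᵥ b)) :
    star V ⬝ᵥ ((vecMulVec a (star V) + vecMulVec V (star a)) *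
        (vecMulVec e (star W) + vecMulVec W (star e)) -
      (vecMulVec b (star V) + vecMulVec V (star b)) *
        (vecMulVec c (star W) + vecMulVec W (star c))).mulVec V
    = (star W ⬝ᵥ a) * (star b ⬝ᵥ W) - (star W ⬝ᵥ b) * (star a ⬝ᵥ W) := by
  simp only [Matrix.sub_mulVec, ← Matrix.mulVec_mulVec, Matrix.add_mulVec,
    vecMulVec_mulVec_eq, Matrix.mulVec_add, Matrix.mulVec_smul, dotProduct_sub,
    dotProduct_add, dotProduct_smul, smul_eq_mul]
  rw [hVV, hVW, hWV, hcV, heV]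
  ring

lemma core3 (hWW : star W ⬝ᵥ W = 1) (hWV : star W ⬝ᵥ V = 0) (hVW : star V ⬝ᵥ W = 0)
    (hcV : star c ⬝ᵥ V = -(star W ⬝ᵥ a)) (heV : star e ⬝ᵥ V = -(star W ⬝ᵥ b)) :
    star W ⬝ᵥ ((vecMulVec c (star W) + vecMulVec W (star c)) *
        (vecMulVec b (star V) + vecMulVec V (star b)) -
      (vecMulVec e (star W) + vecMulVec W (star e)) *
        (vecMulVec a (star V) + vecMulVec V (star a))).mulVec W
    = -((star W ⬝ᵥ a) * (star b ⬝ᵥ W) - (star W ⬝ᵥ b) * (star a ⬝ᵥ W)) := by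
  simp only [Matrix.sub_mulVec, ← Matrix.mulVec_mulVec, Matrix.add_mulVec,
    vecMulVec_mulVec_eq, Matrix.mulVec_add, Matrix.mulVec_smul, dotProduct_sub,
    dotProduct_add, dotProduct_smul, smul_eq_mul]
  rw [hWW, hVW, hWV, hcV, heV]
  ring

lemma core4 (hWW : star W ⬝ᵥ W = 1) (hWV : star W ⬝ᵥ V = 0) (hVW : star V ⬝ᵥ W = 0)
    (hVc : star V ⬝ᵥ c = -(star a ⬝ᵥ W)) (hVe : star V ⬝ᵥ e = -(star b ⬝ᵥ W))
    (hcV : star c ⬝ᵥ V = -(star W ⬝ᵥ a)) (heV : star e ⬝ᵥ V = -(star W ⬝ᵥ b)) :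
    star V ⬝ᵥ ((vecMulVec c (star W) + vecMulVec W (star c)) *
        (vecMulVec e (star W) + vecMulVec W (star e)) -
      (vecMulVec e (star W) + vecMulVec W (star e)) *
        (vecMulVec c (star W) + vecMulVec W (star c))).mulVec V
    = -((star W ⬝ᵥ a) * (star b ⬝ᵥ W) - (star W ⬝ᵥ b) * (star a ⬝ᵥ W)) := by
  simp only [Matrix.sub_mulVec, ← Matrix.mulVec_mulVec, Matrix.add_mulVec,
    vecMulVec_mulVec_eq, Matrix.mulVec_add, Matrix.mulVec_smul, dotProduct_sub,
    dotProduct_add, dotProduct_smul, smul_eq_mul]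
  rw [hWW, hVW, hWV, hVc, hVe, hcV, heV]
  ring

end Core

theorem statement_9 {n m : ℕ} (U : Set (Phase n)) (hU : IsOpen U)
    (v w : Phase n → Fin m → ℂ)
    (hvsmooth : ∀ i, ContDiffOn ℝ (⊤ : ℕ∞) (fun p => v p i) U)
    (hwsmooth : ∀ i, ContDiffOn ℝ (⊤ : ℕ∞) (fun p => w p i) U)
    (hvnorm : ∀ p ∈ U, star (v p) ⬝ᵥ v p = 1)
    (hwnorm : ∀ p ∈ U, star (w p) ⬝ᵥ w p = 1)
    (horth : ∀ p ∈ U, star (w p) ⬝ᵥ v p = 0) :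
    ∀ p ∈ U,
      (Proj1 w p * mbrack (Proj1 v) (Proj1 v) p).trace
        = (Proj1 v p * mbrack (Proj1 v) (Proj1 w) p).trace
      ∧ (Proj1 v p * mbrack (Proj1 v) (Proj1 w) p).trace
        = -(Proj1 w p * mbrack (Proj1 w) (Proj1 v) p).trace
      ∧ -(Proj1 w p * mbrack (Proj1 w) (Proj1 v) p).trace
        = -(Proj1 v p * mbrack (Proj1 w) (Proj1 w) p).trace
      ∧ -(Proj1 v p * mbrack (Proj1 w) (Proj1 w) p).trace
        = star (w p) ⬝ᵥ (cbrack v p).mulVec (w p)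
      ∧ star (w p) ⬝ᵥ (cbrack v p).mulVec (w p)
        = ∑ α : Fin n,
            ((star (w p) ⬝ᵥ pdV v (dX n α) p) * (star (pdV v (dXi n α) p) ⬝ᵥ w p)
             - (star (w p) ⬝ᵥ pdV v (dXi n α) p) * (star (pdV v (dX n α) p) ⬝ᵥ w p)) := by
  intro p hp
  have hVV := hvnorm p hp
  have hWW := hwnorm p hp
  have hWV := horth p hp
  have hVW : star (v p) ⬝ᵥ w p = 0 := by
    have := congrArg star hWV
    rwa [star_dot, star_zero] at this
  have hmix : ∀ d, star (pdV w d p) ⬝ᵥ v p + star (w p) ⬝ᵥ pdV v d p = 0 :=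
    fun d => pdV_dot_rel hU hwsmooth hvsmooth horth hp d
  have hcV : ∀ d, star (pdV w d p) ⬝ᵥ v p = -(star (w p) ⬝ᵥ pdV v d p) :=
    fun d => eq_neg_of_add_eq_zero_left (hmix d)
  have hVc : ∀ d, star (v p) ⬝ᵥ pdV w d p = -(star (pdV v d p) ⬝ᵥ w p) := by
    intro d
    have h1 := congrArg star (hmix d)
    rw [star_add, star_dot, star_dot, star_zero] at h1
    exact eq_neg_of_add_eq_zero_left h1
  have hPv : ∀ d, pdM (Proj1 v) d p
      = vecMulVec (pdV v d p) (star (v p)) + vecMulVec (v p) (star (pdV v d p)) :=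
    fun d => pdM_Proj1 hU hvsmooth hp d
  have hPw : ∀ d, pdM (Proj1 w) d p
      = vecMulVec (pdV w d p) (star (w p)) + vecMulVec (w p) (star (pdV w d p)) :=
    fun d => pdM_Proj1 hU hwsmooth hp d
  set S : Fin n → ℂ := fun α =>
    (star (w p) ⬝ᵥ pdV v (dX n α) p) * (star (pdV v (dXi n α) p) ⬝ᵥ w p)
      - (star (w p) ⬝ᵥ pdV v (dXi n α) p) * (star (pdV v (dX n α) p) ⬝ᵥ w p) with hS
  have E1 : (Proj1 w p * mbrack (Proj1 v) (Proj1 v) p).trace = ∑ α, S α := by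
    rw [mbrack, Finset.mul_sum, Matrix.trace_sum]
    refine Finset.sum_congr rfl fun α _ => ?_
    rw [show Proj1 w p = vecMulVec (w p) (star (w p)) from rfl, trace_vecMulVec_mul,
      hPv, hPv]
    exact core1 _ _ _ _ hVV hWV hVW
  have E2 : (Proj1 v p * mbrack (Proj1 v) (Proj1 w) p).trace = ∑ α, S α := by
    rw [mbrack, Finset.mul_sum, Matrix.trace_sum]
    refine Finset.sum_congr rfl fun α _ => ?_
    rw [show Proj1 v p = vecMulVec (v p) (star (v p)) from rfl, trace_vecMulVec_mul,
      hPv, hPv, hPw, hPw]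
    exact core2 _ _ _ _ _ _ hVV hWV hVW (hcV _) (hcV _)
  have E3 : (Proj1 w p * mbrack (Proj1 w) (Proj1 v) p).trace = -∑ α, S α := by
    rw [mbrack, Finset.mul_sum, Matrix.trace_sum, ← Finset.sum_neg_distrib]
    refine Finset.sum_congr rfl fun α _ => ?_
    rw [show Proj1 w p = vecMulVec (w p) (star (w p)) from rfl, trace_vecMulVec_mul,
      hPv, hPv, hPw, hPw]
    exact core3 _ _ _ _ _ _ hWW hWV hVW (hcV _) (hcV _)
  have E4 : (Proj1 v p * mbrack (Proj1 w) (Proj1 w) p).trace = -∑ α, S α := by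
    rw [mbrack, Finset.mul_sum, Matrix.trace_sum, ← Finset.sum_neg_distrib]
    refine Finset.sum_congr rfl fun α _ => ?_
    rw [show Proj1 v p = vecMulVec (v p) (star (v p)) from rfl, trace_vecMulVec_mul,
      hPw, hPw]
    exact core4 _ _ _ _ _ _ hWW hWV hVW (hVc _) (hVc _) (hcV _) (hcV _)
  have E5 : star (w p) ⬝ᵥ (cbrack v p).mulVec (w p) = ∑ α, S α := by
    rw [cbrack, sum_mulVec_eq, dot_sum]
    refine Finset.sum_congr rfl fun α _ => ?_
    rw [pdVstar_eq, pdVstar_eq, Matrix.sub_mulVec, dotProduct_sub,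
      vecMulVec_mulVec_eq, vecMulVec_mulVec_eq, dotProduct_smul,
      dotProduct_smul, smul_eq_mul, smul_eq_mul, hS]
    ring
  refine ⟨by rw [E1, E2], by rw [E2, E3, neg_neg], by rw [E3, E4],
    by rw [E4, E5, neg_neg], by rw [E5]⟩
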